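/- Let G be a Δ-regular 1-factorizable finite simple graph on n = 4k vertices with 1-factorization M_1,…,M_Δ, and label the vertices of L(G) so that the j-th matching class receives variables x_{(j−1)·n/2+1},…,x_{j·n/2}. Then for each pair 1 ≤ a < b ≤ Δ, the graph polynomial of the 2-regular bipartite graph induced in L(G) by M_a ∪ M_b has a monomial with nonzero coefficient in which every one of its n variables appears with exponent exactly 1. -/

import Mathlib

/-!
At a vertex `v` of `G` the edges of `M a` and `M b` through `v` are adjacent in the line graph,
and every edge of the induced graph `H` arises in this way from exactly one `v`. Hence, up to
sign, the graph polynomial of `H` is `∏ v, (x (A v) - x (B v))`, each factor having one variable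
from `M a` and one from `M b`. A term of its expansion picks one variable per factor, i.e. a map
`f : V → Bool`; it is the monomial `∏ e, x e` exactly when the picked map `V → V(H)` is bijective,
and then its sign is `(-1) ^ #(M b)`. So that coefficient is `±` the number of such `f`, and a
2-colouring of `V` alternating along both matchings provides one. Such a colouring exists since
the partner involution `α` of `M a` maps no cycle of `σ = β ∘ α` (`β` the partner involution of
`M b`) to itself, so `α` pairs off the cycles of `σ`.
-/

open MvPolynomial

/-- An arbitrary linear labeling of a finite vertex type. -/
noncomputable def someLinearOrder (V : Type*) [Fintype V] : LinearOrder V :=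
  LinearOrder.lift' (Fintype.equivFin V) (Fintype.equivFin V).injective

/-- The graph polynomial `∏_{ij ∈ E, i<j} (x_i − x_j)` with respect to a given
linear labeling of the vertices. -/
noncomputable def graphPolyAux {V : Type*} [Fintype V] (lo : LinearOrder V)
    (G : SimpleGraph V) : MvPolynomial V ℤ :=
  letI := lo
  letI := Classical.decRel G.Adj
  ∏ p ∈ Finset.univ.filter (fun p : V × V => G.Adj p.1 p.2 ∧ p.1 < p.2), (X p.1 - X p.2)

/-- The graph polynomial of `G` (its monomial support does not depend on the labeling). -/
noncomputable def graphPoly {V : Type*} [Fintype V] (G : SimpleGraph V) : MvPolynomial V ℤ :=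
  graphPolyAux (someLinearOrder V) G

/-- The Alon–Tarsi number of `G`: one plus the minimum, over monomials with nonzero
coefficient in the graph polynomial, of the maximum exponent of a variable. -/
noncomputable def alonTarsiNumber {V : Type*} [Fintype V] (G : SimpleGraph V) : ℕ :=
  1 + sInf {d : ℕ | ∃ m ∈ (graphPoly G).support, d = Finset.univ.sup fun v => m v}

/-- `G` is colorable from any assignment of lists of size `t`. -/
def Choosable {V : Type*} (G : SimpleGraph V) (t : ℕ) : Prop :=
  ∀ L : V → Finset ℕ, (∀ v, (L v).card = t) →
    ∃ c : V → ℕ, (∀ v, c v ∈ L v) ∧ ∀ ⦃v w⦄, G.Adj v w → c v ≠ c w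

/-- The choice number (list chromatic number) of `G`. -/
noncomputable def choiceNumber {V : Type*} (G : SimpleGraph V) : ℕ :=
  sInf {t : ℕ | Choosable G t}

/-- `M` is a 1-factorization of `G` into `Δ` perfect matchings. -/
def IsOneFactorization {V : Type*} (G : SimpleGraph V) {Δ : ℕ}
    (M : Fin Δ → G.Subgraph) : Prop :=
  (∀ i, (M i).IsPerfectMatching) ∧
  (∀ i j, i ≠ j → Disjoint (M i).edgeSet (M j).edgeSet) ∧
  (⋃ i, (M i).edgeSet) = G.edgeSet

/-- `G` is 1-factorizable into `Δ` perfect matchings. -/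
def OneFactorizable {V : Type*} (G : SimpleGraph V) (Δ : ℕ) : Prop :=
  ∃ M : Fin Δ → G.Subgraph, IsOneFactorization G M

/-- The total graph of `G`, on vertex set `V(G) ⊕ E(G)`. -/
def totalGraph {V : Type*} (G : SimpleGraph V) : SimpleGraph (V ⊕ G.edgeSet) where
  Adj x y := match x, y with
    | .inl v, .inl w => G.Adj v w
    | .inl v, .inr e => v ∈ (e : Sym2 V)
    | .inr e, .inl v => v ∈ (e : Sym2 V)
    | .inr e, .inr f => e ≠ f ∧ ∃ v, v ∈ (e : Sym2 V) ∧ v ∈ (f : Sym2 V)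
  symm := ⟨by
    rintro (v | e) (w | f) h
    · exact G.symm.symm _ _ h
    · exact h
    · exact h
    · exact ⟨h.1.symm, h.2.imp fun v hv => ⟨hv.2, hv.1⟩⟩⟩
  loopless := ⟨by
    rintro (v | e) h
    · exact G.loopless.irrefl v h
    · exact h.1 rfl⟩

/-- The subdivision graph of `G`, on vertex set `V(G) ⊕ E(G)`. -/
def subdivisionGraph {V : Type*} (G : SimpleGraph V) : SimpleGraph (V ⊕ G.edgeSet) where
  Adj x y := match x, y with
    | .inl v, .inr e => v ∈ (e : Sym2 V)
    | .inr e, .inl v => v ∈ (e : Sym2 V)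
    | _, _ => False
  symm := ⟨by rintro (v | e) (w | f) h <;> simp_all⟩
  loopless := ⟨by rintro (v | e) h <;> simp_all⟩

/-- The square of a graph: adjacency at distance 1 or 2. -/
def squareGraph {W : Type*} (H : SimpleGraph W) : SimpleGraph W where
  Adj u v := u ≠ v ∧ (H.Adj u v ∨ ∃ w, H.Adj u w ∧ H.Adj w v)
  symm := ⟨fun u v ⟨hne, h⟩ =>
    ⟨hne.symm, h.imp (fun a => H.symm.symm _ _ a) fun ⟨w, h1, h2⟩ => ⟨w, h2.symm, h1.symm⟩⟩⟩
  loopless := ⟨fun u h => h.1 rfl⟩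

section

open Finset Function

theorem Function.Involutive.exists_bool_apply_eq_not {Q : Type*} {ι : Q → Q}
    (hι : Involutive ι) (hfix : ∀ q, ι q ≠ q) : ∃ f : Q → Bool, ∀ q, f (ι q) = !f q := by
  let _ : LinearOrder Q := IsWellOrder.linearOrder WellOrderingRel
  refine ⟨fun q => decide (q < ι q), fun q => ?_⟩
  show decide (ι q < ι (ι q)) = !decide (q < ι q)
  rw [hι q]
  rcases (hfix q).lt_or_gt with h | h <;> simp [h, h.le]

theorem conj_mul_eq_inv_of_mul_self_eq_one {G : Type*} [Group G] {a b : G} (ha : a * a = 1)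
    (hb : b * b = 1) : a * (b * a) * a⁻¹ = (b * a)⁻¹ := by
  rw [mul_inv_rev, inv_eq_of_mul_eq_one_right ha, inv_eq_of_mul_eq_one_right hb, mul_assoc,
    mul_assoc, ha, mul_one]

namespace Equiv.Perm

variable {V : Type*} {α β : Perm V}

theorem not_sameCycle_mul_apply_self (hα : α * α = 1) (hβ : β * β = 1) (hαf : ∀ v, α v ≠ v)
    (hβf : ∀ v, β v ≠ v) (v : V) : ¬ (β * α).SameCycle v (α v) := by
  -- `α` conjugates `σ ^ j` to `σ ^ (-j)`, so `σ ^ k v = α v` yields a fixed point of `α`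
  -- (at `σ ^ (k / 2) v`) if `k` is even and one of `β` if `k` is odd.
  rintro ⟨k, hk⟩
  set σ := β * α
  have key : ∀ j : ℤ, α ((σ ^ j) v) = (σ ^ (k - j)) v := fun j => calc
    α ((σ ^ j) v) = (α * σ ^ j * α⁻¹) (α v) := by simp [mul_apply]
    _ = (σ ^ (-j)) ((σ ^ k) v) := by rw [← conj_zpow, conj_mul_eq_inv_of_mul_self_eq_one hα hβ, inv_zpow', hk]
    _ = (σ ^ (k - j)) v := by rw [← mul_apply, ← zpow_add, neg_add_eq_sub]
  obtain ⟨m, rfl | rfl⟩ := Int.even_or_odd' k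
  · exact hαf _ ((key m).trans (by rw [show 2 * m - m = m by ring]))
  · refine hβf ((σ ^ (m + 1)) v) ?_
    have hβσ : ∀ x, β x = σ (α x) := fun x => by
      rw [← mul_apply, mul_assoc, hα, mul_one]
    rw [hβσ, key, show 2 * m + 1 - (m + 1) = m by ring, ← mul_apply, ← zpow_one_add, add_comm]

end Equiv.Perm

theorem exists_bool_apply_eq_not_of_involutive {V : Type*} {α β : V → V} (hα : Involutive α)
    (hβ : Involutive β) (hαf : ∀ v, α v ≠ v) (hβf : ∀ v, β v ≠ v) :
    ∃ c : V → Bool, (∀ v, c (α v) = !c v) ∧ ∀ v, c (β v) = !c v := by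
  set a := hα.toPerm α
  set b := hβ.toPerm β
  have ha : a * a = 1 := Equiv.ext hα
  have hb : b * b = 1 := Equiv.ext hβ
  set σ := b * a
  have hσ : a * σ * a⁻¹ = σ⁻¹ := conj_mul_eq_inv_of_mul_self_eq_one ha hb
  have hcycle : ∀ {u w}, σ.SameCycle u w → σ.SameCycle (α u) (α w) := fun h => by
    have := h.conj (g := a)
    rwa [hσ, Equiv.Perm.sameCycle_inv] at this
  let cycles := Equiv.Perm.SameCycle.setoid σ
  let cycle : V → Quotient cycles := Quotient.mk _
  let ι : Quotient cycles → Quotient cycles := Quotient.map α fun _ _ => hcycle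
  have hι : Involutive ι := fun q => q.inductionOn fun v => congrArg cycle (hα v)
  have hιf : ∀ q, ι q ≠ q := fun q => q.inductionOn fun v h =>
    Equiv.Perm.not_sameCycle_mul_apply_self ha hb hαf hβf v (Quotient.exact h).symm
  obtain ⟨f, hf⟩ := hι.exists_bool_apply_eq_not hιf
  refine ⟨fun v => f (cycle v), fun v => hf (cycle v), fun v => ?_⟩
  have hβv : β v = σ (α v) := by simp [σ, a, b, hα v]
  have : cycle (β v) = ι (cycle v) :=
    Quotient.sound (hβv ▸ Equiv.Perm.sameCycle_apply_left.mpr (Equiv.Perm.SameCycle.refl σ _))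
  simp only [this, hf]

variable {W I : Type*} [Fintype I]

theorem prod_X_sub_X_eq_sum_monomial [DecidableEq I] (pa pb : I → W) :
    (∏ i, (X (pa i) - X (pb i)) : MvPolynomial W ℤ) =
      ∑ f : I → Bool, monomial (∑ i, Finsupp.single (cond (f i) (pa i) (pb i)) 1)
        ((-1) ^ #{i | f i = false}) := by
  have hfactor : ∀ i, (X (pa i) - X (pb i) : MvPolynomial W ℤ) =
      ∑ b : Bool, monomial (Finsupp.single (cond b (pa i) (pb i)) 1) (cond b 1 (-1)) := by
    simp [sub_eq_add_neg, X]
  simp_rw [hfactor, Fintype.prod_sum, ← monomial_sum_prod]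
  refine Fintype.sum_congr _ _ fun f => congrArg _ ?_
  rw [← prod_const, prod_filter]
  exact prod_congr rfl fun i _ => by cases f i <;> rfl

theorem coeff_prod_X_sub_X [Fintype W] [DecidableEq W] (P : Finset W) (pa pb : I → W)
    (hpa : ∀ i, pa i ∈ P) (hpb : ∀ i, pb i ∉ P) (m : W →₀ ℕ) :
    coeff m (∏ i, (X (pa i) - X (pb i)) : MvPolynomial W ℤ) = (-1) ^ (∑ w ∈ Pᶜ, m w) *
      Nat.card {f : I → Bool // ∑ i, Finsupp.single (cond (f i) (pa i) (pb i)) 1 = m} := by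
  classical
  have hsign : ∀ f : I → Bool, ∑ i, Finsupp.single (cond (f i) (pa i) (pb i)) 1 = m →
      #{i | f i = false} = ∑ w ∈ Pᶜ, m w := by
    rintro f rfl
    simp only [Finsupp.finsetSum_apply, Finsupp.single_apply]
    rw [sum_comm, card_filter]
    refine sum_congr rfl fun i _ => ?_
    cases f i <;> simp [hpa, hpb]
  rw [prod_X_sub_X_eq_sum_monomial, coeff_sum]
  simp only [coeff_monomial]
  rw [← sum_filter, sum_congr rfl fun f hf => by rw [hsign f (mem_filter.mp hf).2], sum_const,
    Nat.card_eq_fintype_card, Fintype.card_subtype, nsmul_eq_mul, mul_comm]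

theorem graphPolyAux_eq_neg_one_pow_mul_prod [Fintype W] (lo : LinearOrder W)
    (H : SimpleGraph W) (pa pb : I → W) (hadj : ∀ i, H.Adj (pa i) (pb i))
    (hinj : Injective fun i => s(pa i, pb i))
    (hsurj : ∀ u w, H.Adj u w → ∃ i, s(pa i, pb i) = s(u, w)) :
    ∃ n : ℕ, graphPolyAux lo H = (-1) ^ n * ∏ i, (X (pa i) - X (pb i)) := by
  let _ : LinearOrder W := lo
  have hfactor : ∀ i, (X (pa i ⊓ pb i) - X (pa i ⊔ pb i) : MvPolynomial W ℤ) =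
      (-1) ^ (if pa i < pb i then 0 else 1) * (X (pa i) - X (pb i)) := fun i => by
    rcases (hadj i).ne.lt_or_gt with h | h <;> simp [h, h.le, h.not_gt]
  refine ⟨∑ i, if pa i < pb i then 0 else 1, ?_⟩
  rw [← prod_pow_eq_pow_sum, ← prod_mul_distrib, ← prod_congr rfl fun i _ => hfactor i]
  symm
  refine prod_nbij (fun i => (pa i ⊓ pb i, pa i ⊔ pb i)) (fun i _ => ?_) (fun i _ j _ hij => ?_)
    (fun p hp => ?_) fun _ _ => rfl
  · rcases (hadj i).ne.lt_or_gt with h | h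
    · simpa [h.le] using And.intro (hadj i) h
    · simpa [h.le] using And.intro (hadj i).symm h
  · refine hinj (Sym2.inf_eq_inf_and_sup_eq_sup.mp ?_)
    simpa using hij
  · simp only [coe_filter, mem_univ, true_and] at hp
    obtain ⟨i, hi⟩ := hsurj _ _ hp.1
    refine ⟨i, mem_coe.mpr (mem_univ i), ?_⟩
    have := Sym2.inf_eq_inf_and_sup_eq_sup.mpr hi
    simp only [Sym2.inf_mk, Sym2.sup_mk] at this
    exact Prod.ext (this.1.trans (inf_eq_left.mpr hp.2.le))
      (this.2.trans (sup_eq_right.mpr hp.2.le))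

theorem exists_mem_support_graphPoly_forall_eq_one [Fintype W] (H : SimpleGraph W)
    (P : Set W) (pa pb : I → W) (hpa : ∀ i, pa i ∈ P) (hpb : ∀ i, pb i ∉ P)
    (hadj : ∀ i, H.Adj (pa i) (pb i)) (hinj : Injective fun i => s(pa i, pb i))
    (hsurj : ∀ u w, H.Adj u w → ∃ i, s(pa i, pb i) = s(u, w))
    (f : I → Bool) (hf : Bijective fun i => cond (f i) (pa i) (pb i)) :
    ∃ m ∈ (graphPoly H).support, ∀ w, m w = 1 := by
  classical
  obtain ⟨n, hn⟩ :=
    graphPolyAux_eq_neg_one_pow_mul_prod (someLinearOrder W) H pa pb hadj hinj hsurj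
  refine ⟨∑ i, Finsupp.single (cond (f i) (pa i) (pb i)) 1, ?_, fun w => ?_⟩
  · have : Nonempty {g : I → Bool // ∑ i, Finsupp.single (cond (g i) (pa i) (pb i)) 1 =
        ∑ i, Finsupp.single (cond (f i) (pa i) (pb i)) 1} := ⟨⟨f, rfl⟩⟩
    rw [mem_support_iff, graphPoly, hn, show (-1 : MvPolynomial W ℤ) ^ n = C ((-1) ^ n) by simp,
      coeff_C_mul, coeff_prod_X_sub_X P.toFinset pa pb (by simpa using hpa) (by simpa using hpb)]
    simp
  · rw [hf.sum_comp fun w => Finsupp.single w 1]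
    simp

namespace SimpleGraph.Subgraph.IsPerfectMatching

variable {V : Type*} {G : SimpleGraph V}

section

variable {M : G.Subgraph} (h : M.IsPerfectMatching)

noncomputable def partner (v : V) : V := (isPerfectMatching_iff.mp h v).exists.choose

theorem adj_partner (v : V) : M.Adj v (h.partner v) :=
  (isPerfectMatching_iff.mp h v).exists.choose_spec

theorem partner_eq_of_adj {v w : V} (hvw : M.Adj v w) : h.partner v = w :=
  h.1.eq_of_adj_left (h.adj_partner v) hvw

theorem partner_involutive : Involutive h.partner := fun v =>
  h.partner_eq_of_adj (h.adj_partner v).symm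

theorem partner_ne (v : V) : h.partner v ≠ v := (h.adj_partner v).ne.symm

theorem eq_mk_partner_of_mem {e : Sym2 V} (he : e ∈ M.edgeSet) {v : V} (hv : v ∈ e) :
    e = s(v, h.partner v) := by
  induction e using Sym2.ind with | _ x y
  rcases Sym2.mem_iff.mp hv with rfl | rfl
  · rw [h.partner_eq_of_adj he]
  · rw [Sym2.eq_swap, h.partner_eq_of_adj (M.adj_symm he)]

theorem eq_or_eq_partner_of_mk_eq {u v : V} (huv : s(u, h.partner u) = s(v, h.partner v)) :
    u = v ∨ u = h.partner v :=
  Sym2.mem_iff.mp (huv ▸ Sym2.mem_mk_left u _)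

theorem exists_mem_apply_eq {c : V → Bool} (hc : ∀ v, c (h.partner v) = !c v) {e : Sym2 V}
    (he : e ∈ M.edgeSet) (b : Bool) : ∃ v ∈ e, c v = b := by
  induction e using Sym2.ind with | _ x y
  obtain rfl : h.partner x = y := h.partner_eq_of_adj he
  by_cases hx : c x = b
  · exact ⟨x, Sym2.mem_mk_left _ _, hx⟩
  · exact ⟨h.partner x, Sym2.mem_mk_right _ _, by rw [hc]; cases b <;> simpa using hx⟩

theorem partner_ne_partner {M' : G.Subgraph} (h' : M'.IsPerfectMatching)
    (hMM' : Disjoint M.edgeSet M'.edgeSet) (v : V) : h.partner v ≠ h'.partner v := fun hv =>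
  Set.disjoint_left.mp hMM' (show s(v, h.partner v) ∈ M.edgeSet from h.adj_partner v)
    (hv ▸ h'.adj_partner v)

end

variable {A B : G.Subgraph}

noncomputable def leftEdge (hA : A.IsPerfectMatching) (B : G.Subgraph) (v : V) :
    {e : G.edgeSet | e.1 ∈ A.edgeSet ∪ B.edgeSet} :=
  ⟨⟨s(v, hA.partner v), (hA.adj_partner v).adj_sub⟩, Or.inl (hA.adj_partner v)⟩

noncomputable def rightEdge (hB : B.IsPerfectMatching) (A : G.Subgraph) (v : V) :
    {e : G.edgeSet | e.1 ∈ A.edgeSet ∪ B.edgeSet} :=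
  ⟨⟨s(v, hB.partner v), (hB.adj_partner v).adj_sub⟩, Or.inr (hB.adj_partner v)⟩

variable (hA : A.IsPerfectMatching) (hB : B.IsPerfectMatching)

theorem leftEdge_eq_of_mem {u : {e : G.edgeSet | e.1 ∈ A.edgeSet ∪ B.edgeSet}}
    (hu : u.1.1 ∈ A.edgeSet) {v : V} (hv : v ∈ u.1.1) : hA.leftEdge B v = u :=
  Subtype.ext <| Subtype.ext (hA.eq_mk_partner_of_mem hu hv).symm

theorem rightEdge_eq_of_mem {u : {e : G.edgeSet | e.1 ∈ A.edgeSet ∪ B.edgeSet}}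
    (hu : u.1.1 ∈ B.edgeSet) {v : V} (hv : v ∈ u.1.1) : hB.rightEdge A v = u :=
  Subtype.ext <| Subtype.ext (hB.eq_mk_partner_of_mem hu hv).symm

theorem leftEdge_ne_rightEdge (hAB : Disjoint A.edgeSet B.edgeSet) (u v : V) :
    hA.leftEdge B u ≠ hB.rightEdge A v := fun h => by
  have hu : s(u, hA.partner u) ∈ A.edgeSet := hA.adj_partner u
  have hv : s(v, hB.partner v) ∈ B.edgeSet := hB.adj_partner v
  have huv : s(u, hA.partner u) = s(v, hB.partner v) := congrArg (·.1.1) h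
  exact Set.disjoint_left.mp hAB hu (huv ▸ hv)

theorem lineGraph_adj_leftEdge_rightEdge (hAB : Disjoint A.edgeSet B.edgeSet) (v : V) :
    (G.lineGraph.induce {e : G.edgeSet | e.1 ∈ A.edgeSet ∪ B.edgeSet}).Adj
      (hA.leftEdge B v) (hB.rightEdge A v) :=
  lineGraph_adj_iff_exists.mpr ⟨fun h => leftEdge_ne_rightEdge hA hB hAB v v (Subtype.ext h),
    v, Sym2.mem_mk_left _ _, Sym2.mem_mk_left _ _⟩

theorem exists_mk_eq_of_lineGraph_adj {u w : {e : G.edgeSet | e.1 ∈ A.edgeSet ∪ B.edgeSet}}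
    (huw : (G.lineGraph.induce {e : G.edgeSet | e.1 ∈ A.edgeSet ∪ B.edgeSet}).Adj u w) :
    ∃ v, s(hA.leftEdge B v, hB.rightEdge A v) = s(u, w) := by
  obtain ⟨hne, x, hxu, hxw⟩ := lineGraph_adj_iff_exists.mp huw
  rcases u.2 with hu | hu <;> rcases w.2 with hw | hw
  · exact (hne (congrArg Subtype.val
      ((hA.leftEdge_eq_of_mem hu hxu).symm.trans (hA.leftEdge_eq_of_mem hw hxw)))).elim
  · exact ⟨x, by rw [hA.leftEdge_eq_of_mem hu hxu, hB.rightEdge_eq_of_mem hw hxw]⟩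
  · exact ⟨x, by
      rw [hA.leftEdge_eq_of_mem hw hxw, hB.rightEdge_eq_of_mem hu hxu, Sym2.eq_swap]⟩
  · exact (hne (congrArg Subtype.val
      ((hB.rightEdge_eq_of_mem hu hxu).symm.trans (hB.rightEdge_eq_of_mem hw hxw)))).elim

theorem injective_mk_leftEdge_rightEdge (hAB : Disjoint A.edgeSet B.edgeSet) :
    Injective fun v => s(hA.leftEdge B v, hB.rightEdge A v) := by
  intro u v huv
  obtain ⟨hl, hr⟩ | ⟨hlr, -⟩ := Sym2.eq_iff.mp huv
  · rcases hA.eq_or_eq_partner_of_mk_eq (congrArg (·.1.1) hl) with huv | huA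
    · exact huv
    rcases hB.eq_or_eq_partner_of_mk_eq (congrArg (·.1.1) hr) with huv | huB
    · exact huv
    exact absurd (huA.symm.trans huB) (hA.partner_ne_partner hB hAB v)
  · exact absurd hlr (leftEdge_ne_rightEdge hA hB hAB u v)

theorem bijective_cond_leftEdge_rightEdge (hAB : Disjoint A.edgeSet B.edgeSet) {c : V → Bool}
    (hcA : ∀ v, c (hA.partner v) = !c v) (hcB : ∀ v, c (hB.partner v) = !c v) :
    Bijective fun v => cond (c v) (hA.leftEdge B v) (hB.rightEdge A v) := by
  refine ⟨fun u v huv => ?_, fun w => ?_⟩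
  · cases hu : c u <;> cases hv : c v <;> simp only [hu, hv, cond_true, cond_false] at huv
    · rcases hB.eq_or_eq_partner_of_mk_eq (congrArg (·.1.1) huv) with h | rfl
      · exact h
      · simp [hcB, hv] at hu
    · exact absurd huv.symm (leftEdge_ne_rightEdge hA hB hAB v u)
    · exact absurd huv (leftEdge_ne_rightEdge hA hB hAB u v)
    · rcases hA.eq_or_eq_partner_of_mk_eq (congrArg (·.1.1) huv) with h | rfl
      · exact h
      · simp [hcA, hv] at hu
  · rcases w.2 with hw | hw
    · obtain ⟨x, hx, hcx⟩ := hA.exists_mem_apply_eq hcA hw true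
      exact ⟨x, by simp only [hcx, cond_true]; exact hA.leftEdge_eq_of_mem hw hx⟩
    · obtain ⟨x, hx, hcx⟩ := hB.exists_mem_apply_eq hcB hw false
      exact ⟨x, by simp only [hcx, cond_false]; exact hB.rightEdge_eq_of_mem hw hx⟩

end SimpleGraph.Subgraph.IsPerfectMatching

end

open scoped Classical in
theorem EFL_pair_of_matchings_permanent_monomial_general {V : Type*} [Fintype V]
    (G : SimpleGraph V) [DecidableRel G.Adj] (Δ : ℕ)
    (M : Fin Δ → G.Subgraph) (hM : IsOneFactorization G M)
    (a b : Fin Δ) (hab : a ≠ b) :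
    ∃ m ∈ (graphPoly ((G.lineGraph).induce
        {e : G.edgeSet | e.1 ∈ (M a).edgeSet ∪ (M b).edgeSet})).support,
      ∀ v, m v = 1 := by
  obtain ⟨hpm, hdisj, -⟩ := hM
  have hAB := hdisj a b hab
  obtain ⟨c, hcA, hcB⟩ := exists_bool_apply_eq_not_of_involutive (hpm a).partner_involutive
    (hpm b).partner_involutive (hpm a).partner_ne (hpm b).partner_ne
  exact exists_mem_support_graphPoly_forall_eq_one _ {u | u.1.1 ∈ (M a).edgeSet}
    ((hpm a).leftEdge (M b)) ((hpm b).rightEdge (M a)) (hpm a).adj_partner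
    (fun v => Set.disjoint_right.mp hAB ((hpm b).adj_partner v))
    ((hpm a).lineGraph_adj_leftEdge_rightEdge (hpm b) hAB)
    ((hpm a).injective_mk_leftEdge_rightEdge (hpm b) hAB)
    (fun _ _ => (hpm a).exists_mk_eq_of_lineGraph_adj (hpm b)) c
    ((hpm a).bijective_cond_leftEdge_rightEdge (hpm b) hAB hcA hcB)

open scoped Classical in
/-- Let `G` be a `Δ`-regular 1-factorizable graph on `n = 4k` vertices
with 1-factorization `M`. For any two distinct matchings `M a`, `M b`, the graph
polynomial of the (2-regular bipartite) subgraph of the line graph induced by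
`M a ∪ M b` has a monomial with nonzero coefficient in which every variable appears
with exponent exactly `1`. -/
theorem EFL_pair_of_matchings_permanent_monomial {V : Type*} [Fintype V] [DecidableEq V]
    (G : SimpleGraph V) [DecidableRel G.Adj] (k Δ : ℕ) (hk : 0 < k)
    (hn : Fintype.card V = 4 * k) (hreg : G.IsRegularOfDegree Δ)
    (M : Fin Δ → G.Subgraph) (hM : IsOneFactorization G M)
    (a b : Fin Δ) (hab : a ≠ b) :
    ∃ m ∈ (graphPoly ((G.lineGraph).induce
        {e : G.edgeSet | e.1 ∈ (M a).edgeSet ∪ (M b).edgeSet})).support,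
      ∀ v, m v = 1 :=
  EFL_pair_of_matchings_permanent_monomial_general G Δ M hM a b hab
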